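/- arXiv:2301.08830 — 4 statements merged into one kernel-verified Lean document; each statement's English description precedes it below -/
import Mathlib

section
/- A constant-sum regular game has convex exploitability: if the strategy sets S_i are convex subsets of real vector spaces, Σ_i u_i(x) is constant in x, and each u_i(x) = f_i(x_i) + Σ_{j ≠ i} g_{ij}(x_i, x_j) with each g_{ij} convex in its second argument, then the exploitability Φ(x) = Σ_i (sup_{y_i ∈ S_i} u_i(y_i, x_{-i}) - u_i(x)) is a convex function of the profile x. -/
/-!
For a fixed deviation `y` of player `i`, the payoff `u i (x₋ᵢ, y) = f i y + ∑ⱼ g i j y (x j)` is a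
convex function of the profile `x`, so each best-response value `sup_y u i (x₋ᵢ, y)` is a pointwise
supremum of convex functions, hence convex. Since the game is constant-sum, the exploitability is
`∑ᵢ sup_y u i (x₋ᵢ, y) - c`, a sum of convex functions plus a constant.
-/

open Finset

section ConvexOn

variable {E : Type*} [AddCommGroup E] [Module ℝ E] {s : Set E}

theorem ConvexOn.finset_sum {ι : Type*} (hs : Convex ℝ s) (t : Finset ι) {F : ι → E → ℝ}
    (hF : ∀ k ∈ t, ConvexOn ℝ s (F k)) : ConvexOn ℝ s (fun x => ∑ k ∈ t, F k x) := by
  classical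
  induction t using Finset.induction_on with
  | empty => simpa using convexOn_const 0 hs
  | insert k t hk ih =>
    simp only [Finset.sum_insert hk]
    exact (hF k (mem_insert_self k t)).add (ih fun l hl => hF l (mem_insert_of_mem hl))

/-- For empty `T` the function is the constant junk value `sSup ∅ = 0`. -/
theorem ConvexOn.sSup_of_bddAbove {α : Type*} {T : Set α} {F : α → E → ℝ}
    (hF : ∀ y ∈ T, ConvexOn ℝ s (F y))
    (hbdd : ∀ x ∈ s, BddAbove {v : ℝ | ∃ y ∈ T, v = F y x}) (hs : Convex ℝ s) :
    ConvexOn ℝ s (fun x => sSup {v : ℝ | ∃ y ∈ T, v = F y x}) := by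
  rcases T.eq_empty_or_nonempty with rfl | ⟨y₀, hy₀⟩
  · simpa using convexOn_const 0 hs
  refine ⟨hs, fun x hx z hz a b ha hb hab => ?_⟩
  refine csSup_le ⟨_, y₀, hy₀, rfl⟩ ?_
  rintro v ⟨y, hy, rfl⟩
  calc F y (a • x + b • z) ≤ a • F y x + b • F y z := (hF y hy).2 hx hz ha hb hab
    _ ≤ a • sSup {v : ℝ | ∃ y ∈ T, v = F y x} + b • sSup {v : ℝ | ∃ y ∈ T, v = F y z} := by
      gcongr
      · exact le_csSup (hbdd x hx) ⟨y, hy, rfl⟩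
      · exact le_csSup (hbdd z hz) ⟨y, hy, rfl⟩

end ConvexOn

theorem convexOn_univ_pi_sum_apply {I : Type*} {E : I → Type*} [∀ j, AddCommGroup (E j)]
    [∀ j, Module ℝ (E j)] {S : ∀ j, Set (E j)} (hS : ∀ j, Convex ℝ (S j)) (t : Finset I)
    {h : ∀ j, E j → ℝ} (hh : ∀ j ∈ t, ConvexOn ℝ (S j) (h j)) :
    ConvexOn ℝ (Set.univ.pi S) (fun x => ∑ j ∈ t, h j (x j)) := by
  have hpi : Convex ℝ (Set.univ.pi S) := convex_pi fun j _ => hS j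
  refine ConvexOn.finset_sum hpi t fun j hj => ?_
  exact ((hh j hj).comp_linearMap (LinearMap.proj j)).subset
    (fun x hx => hx j (Set.mem_univ j)) hpi

theorem regular_game_convex_exploitability_general {I : Type*} [Fintype I] [DecidableEq I]
    {n : I → ℕ} (S : ∀ i, Set (Fin (n i) → ℝ)) (hS : ∀ i, Convex ℝ (S i))
    (f : ∀ i, (Fin (n i) → ℝ) → ℝ)
    (g : ∀ i j, (Fin (n i) → ℝ) → (Fin (n j) → ℝ) → ℝ)
    (hg : ∀ i j, ∀ a : Fin (n i) → ℝ, ConvexOn ℝ (S j) (g i j a))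
    (u : ∀ i, (∀ k, Fin (n k) → ℝ) → ℝ)
    (hu : ∀ i x, u i x = f i (x i) + ∑ j ∈ Finset.univ \ {i}, g i j (x i) (x j))
    (c : ℝ) (hconst : ∀ x ∈ Set.univ.pi S, ∑ i, u i x = c)
    (hbdd : ∀ x ∈ Set.univ.pi S, ∀ i,
      BddAbove {v : ℝ | ∃ y ∈ S i, v = u i (Function.update x i y)}) :
    ConvexOn ℝ (Set.univ.pi S)
      (fun x => ∑ i,
        (sSup {v : ℝ | ∃ y ∈ S i, v = u i (Function.update x i y)} - u i x)) := by
  have hpi : Convex ℝ (Set.univ.pi S) := convex_pi fun i _ => hS i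
  have hdeviation : ∀ i y, ConvexOn ℝ (Set.univ.pi S) (fun x => u i (Function.update x i y)) := by
    refine fun i y => ((convexOn_const (f i y) hpi).add
      (convexOn_univ_pi_sum_apply hS (univ \ {i}) fun j _ => hg i j y)).congr fun x _ => ?_
    rw [Pi.add_apply, hu, Function.update_self]
    refine congrArg _ (sum_congr rfl fun j hj => ?_)
    rw [Function.update_of_ne (by simpa using hj)]
  have hbest : ∀ i, ConvexOn ℝ (Set.univ.pi S)
      (fun x => sSup {v : ℝ | ∃ y ∈ S i, v = u i (Function.update x i y)}) := fun i =>
    ConvexOn.sSup_of_bddAbove (fun y _ => hdeviation i y) (fun x hx => hbdd x hx i) hpi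
  refine ((ConvexOn.finset_sum hpi univ fun i _ => hbest i).add_const (-c)).congr fun x hx => ?_
  simp only [Pi.add_apply]
  rw [sum_sub_distrib, hconst x hx, sub_eq_add_neg]

/-- A constant-sum regular game has convex exploitability. -/
theorem regular_game_convex_exploitability {I : Type*} [Fintype I] [DecidableEq I]
    {n : I → ℕ} (S : ∀ i, Set (Fin (n i) → ℝ)) (hS : ∀ i, Convex ℝ (S i))
    (hSne : ∀ i, (S i).Nonempty)
    (f : ∀ i, (Fin (n i) → ℝ) → ℝ)
    (g : ∀ i j, (Fin (n i) → ℝ) → (Fin (n j) → ℝ) → ℝ)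
    (hg : ∀ i j, ∀ a : Fin (n i) → ℝ, ConvexOn ℝ (S j) (g i j a))
    (u : ∀ i, (∀ k, Fin (n k) → ℝ) → ℝ)
    (hu : ∀ i x, u i x = f i (x i) + ∑ j ∈ Finset.univ \ {i}, g i j (x i) (x j))
    (c : ℝ) (hconst : ∀ x ∈ Set.univ.pi S, ∑ i, u i x = c)
    (hbdd : ∀ x ∈ Set.univ.pi S, ∀ i,
      BddAbove {v : ℝ | ∃ y ∈ S i, v = u i (Function.update x i y)}) :
    ConvexOn ℝ (Set.univ.pi S)
      (fun x => ∑ i,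
        (sSup {v : ℝ | ∃ y ∈ S i, v = u i (Function.update x i y)} - u i x)) :=
  regular_game_convex_exploitability_general S hS f g hg u hu c hconst hbdd
end

section
/- A constant-sum polymatrix game has convex exploitability: if each player's utility is u_i(x) = Σ_{j ≠ i} x_i^T A_{ij} x_j, the strategy sets are convex, and Σ_i u_i(x) is constant in x, then the exploitability Φ(x) = Σ_i (sup_{y_i ∈ S_i} u_i(y_i, x_{-i}) - u_i(x)) is convex in x. -/
/-- A constant-sum polymatrix game has convex exploitability. -/
theorem polymatrix_game_convex_exploitability {I : Type*} [Fintype I] [DecidableEq I]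
    {n : I → ℕ} (S : ∀ i, Set (Fin (n i) → ℝ)) (hS : ∀ i, Convex ℝ (S i))
    (hSne : ∀ i, (S i).Nonempty)
    (A : ∀ i j, Matrix (Fin (n i)) (Fin (n j)) ℝ)
    (u : ∀ i, (∀ k, Fin (n k) → ℝ) → ℝ)
    (hu : ∀ i x, u i x = ∑ j ∈ Finset.univ \ {i}, dotProduct (x i) ((A i j).mulVec (x j)))
    (c : ℝ) (hconst : ∀ x ∈ Set.univ.pi S, ∑ i, u i x = c)
    (hbdd : ∀ x ∈ Set.univ.pi S, ∀ i,
      BddAbove {v : ℝ | ∃ y ∈ S i, v = u i (Function.update x i y)}) :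
    ConvexOn ℝ (Set.univ.pi S)
      (fun x => ∑ i,
        (sSup {v : ℝ | ∃ y ∈ S i, v = u i (Function.update x i y)} - u i x)) := by
  have hconvS : Convex ℝ (Set.univ.pi S) := convex_pi (fun i _ => hS i)
  refine ⟨hconvS, ?_⟩
  intro x hx z hz a b ha hb hab
  have hmem := hconvS hx hz ha hb hab
  set g := fun (w : ∀ k, Fin (n k) → ℝ) (i : I) =>
    sSup {v : ℝ | ∃ y ∈ S i, v = u i (Function.update w i y)} with hg
  have hsum : ∀ w ∈ Set.univ.pi S,
      ∑ i, (g w i - u i w) = (∑ i, g w i) - c := by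
    intro w hw
    rw [Finset.sum_sub_distrib, hconst w hw]
  have key : ∀ i, g (a • x + b • z) i ≤ a * g x i + b * g z i := by
    intro i
    apply csSup_le
    · obtain ⟨y, hy⟩ := hSne i
      exact ⟨_, y, hy, rfl⟩
    · rintro v ⟨y, hy, rfl⟩
      have hlin : u i (Function.update (a • x + b • z) i y)
          = a * u i (Function.update x i y) + b * u i (Function.update z i y) := by
        simp only [hu]
        rw [Finset.mul_sum, Finset.mul_sum, ← Finset.sum_add_distrib]
        refine Finset.sum_congr rfl (fun j hj => ?_)
        have hji : j ≠ i := by simpa [Finset.mem_sdiff] using hj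
        simp only [Function.update_self, Function.update_of_ne hji, Pi.add_apply,
          Pi.smul_apply, Matrix.mulVec_add, Matrix.mulVec_smul, dotProduct_add,
          dotProduct_smul, smul_eq_mul]
      rw [hlin]
      have h1 : u i (Function.update x i y) ≤ g x i :=
        le_csSup (hbdd x hx i) ⟨y, hy, rfl⟩
      have h2 : u i (Function.update z i y) ≤ g z i :=
        le_csSup (hbdd z hz i) ⟨y, hy, rfl⟩
      have := mul_le_mul_of_nonneg_left h1 ha
      have := mul_le_mul_of_nonneg_left h2 hb
      linarith
  simp only [smul_eq_mul]
  calc ∑ i, (g (a • x + b • z) i - u i (a • x + b • z))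
      = (∑ i, g (a • x + b • z) i) - c := hsum _ hmem
    _ ≤ (∑ i, (a * g x i + b * g z i)) - c := by
        gcongr with i _
        exact key i
    _ = a * ((∑ i, g x i) - c) + b * ((∑ i, g z i) - c) := by
        rw [Finset.sum_add_distrib, ← Finset.mul_sum, ← Finset.mul_sum]
        have hc : a * c + b * c = c := by rw [← add_mul, hab, one_mul]
        linarith
    _ = a * (∑ i, (g x i - u i x)) + b * (∑ i, (g z i - u i z)) := by
        rw [hsum _ hx, hsum _ hz]
end

section
/- In the Glicksberg–Gross game with u(x, y) = (1+x)(1+y)(1-xy)/(1+xy)² on [0,1]², the game value against the equilibrium distribution is constant: if Y is a random variable on [0,1] with CDF F(t) = (4/π)·arctan(√t), then E[u(x, Y)] = 4/π for every x ∈ [0,1]. -/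
open Real

/-- In the Glicksberg–Gross game, the expected utility against the equilibrium
distribution (with density (2/π)·1/(√t·(1+t))) is 4/π for every x ∈ [0,1]. -/
theorem glicksberg_gross_value (x : ℝ) (hx : x ∈ Set.Icc (0 : ℝ) 1) :
    ∫ y in (0 : ℝ)..1,
        ((1 + x) * (1 + y) * (1 - x * y) / (1 + x * y) ^ 2) *
          ((2 / π) * (1 / (Real.sqrt y * (1 + y)))) = 4 / π := by
  obtain ⟨hx0, hx1⟩ := hx
  have hπ : (0:ℝ) < π := Real.pi_pos
  set g : ℝ → ℝ := fun y =>
      (1 + x) * (1 + y) * (1 - x * y) / (1 + x * y) ^ 2 *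
        ((2 / π) * (1 / (Real.sqrt y * (1 + y)))) with hg
  set f : ℝ → ℝ := fun y => (2/π) * (1+x) * (2 * Real.sqrt y / (1 + x*y)) with hf
  have hden : ∀ y : ℝ, 0 ≤ y → (0:ℝ) < 1 + x*y := by
    intro y hy
    nlinarith
  have hcont : ContinuousOn f (Set.Icc 0 1) := by
    apply ContinuousOn.mul continuousOn_const
    apply ContinuousOn.div
    · exact (Real.continuous_sqrt.continuousOn).const_smul 2 |>.congr (by intro y _; simp [smul_eq_mul])
    · exact (continuous_const.add (continuous_const.mul continuous_id)).continuousOn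
    · intro y hy
      exact (hden y hy.1).ne'
  have hderiv : ∀ y ∈ Set.Ioo (0:ℝ) 1, HasDerivAt f (g y) y := by
    intro y hy
    obtain ⟨hy0, hy1⟩ := hy
    obtain ⟨t, ht0, rfl⟩ : ∃ t : ℝ, 0 < t ∧ t^2 = y :=
      ⟨Real.sqrt y, Real.sqrt_pos.mpr hy0, Real.sq_sqrt hy0.le⟩
    have hst : Real.sqrt (t^2) = t := Real.sqrt_sq ht0.le
    have hs : (0:ℝ) < Real.sqrt (t^2) := by rw [hst]; exact ht0
    have hd : (0:ℝ) < 1 + x*t^2 := hden _ (by positivity)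
    have h1 : HasDerivAt (fun y => 2 * Real.sqrt y) (2 * (1 / (2 * Real.sqrt (t^2)))) (t^2) :=
      (Real.hasDerivAt_sqrt (by positivity)).const_mul 2
    have h2 : HasDerivAt (fun y => 1 + x*y) x (t^2) := by
      simpa using ((hasDerivAt_id (t^2)).const_mul x).const_add 1
    have h3 := (h1.div h2 hd.ne').const_mul ((2/π) * (1+x))
    refine h3.congr_deriv ?_
    have hy1' : (0:ℝ) < 1 + t^2 := by positivity
    rw [hg]
    simp only [hst]
    field_simp
    ring
  have hint : IntervalIntegrable g MeasureTheory.volume 0 1 := by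
    have hmaj : IntervalIntegrable (fun y : ℝ => (4/π) * y ^ (-(1/2) : ℝ))
        MeasureTheory.volume 0 1 :=
      (intervalIntegral.intervalIntegrable_rpow' (by norm_num)).const_mul _
    apply hmaj.mono_fun
    · apply Measurable.aestronglyMeasurable
      fun_prop
    · rw [Filter.EventuallyLE, MeasureTheory.ae_restrict_iff' measurableSet_uIoc]
      filter_upwards with y hy
      rw [Set.uIoc_of_le (by norm_num : (0:ℝ) ≤ 1)] at hy
      obtain ⟨hy0, hy1⟩ := hy
      have hs : (0:ℝ) < Real.sqrt y := Real.sqrt_pos.mpr hy0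
      have hd : (0:ℝ) < 1 + x*y := hden y hy0.le
      have hy1' : (0:ℝ) < 1 + y := by linarith
      have hxy : x * y ≤ 1 := by nlinarith
      have hA : g y = (2/π) * (1+x) * ((1 - x*y)/(1+x*y)^2) * (1/Real.sqrt y) := by
        simp only [hg]
        field_simp
      have hgnn : 0 ≤ g y := by
        rw [hA]
        have : 0 ≤ (1 - x*y)/(1+x*y)^2 := div_nonneg (by linarith) (by positivity)
        positivity
      have hrw : y ^ (-(1/2) : ℝ) = 1 / Real.sqrt y := by
        rw [Real.rpow_neg hy0.le, Real.sqrt_eq_rpow]; norm_num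
      have hp : (0:ℝ) ≤ 4/π * y ^ (-(1/2) : ℝ) :=
        mul_nonneg (by positivity) (Real.rpow_nonneg hy0.le _)
      rw [Real.norm_eq_abs, Real.norm_eq_abs, abs_of_nonneg hgnn, abs_of_nonneg hp, hrw, hA]
      have hq : (1 - x*y)/(1+x*y)^2 ≤ 1 := by
        rw [div_le_one (by positivity)]
        nlinarith [mul_nonneg hx0 hy0.le, sq_nonneg (x*y)]
      have hq0 : 0 ≤ (1 - x*y)/(1+x*y)^2 := div_nonneg (by linarith) (by positivity)
      have : (2/π) * (1+x) * ((1 - x*y)/(1+x*y)^2) ≤ (2/π) * 2 * 1 := by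
        have h2π : (0:ℝ) ≤ 2/π := by positivity
        gcongr <;> nlinarith
      calc (2/π) * (1+x) * ((1 - x*y)/(1+x*y)^2) * (1/Real.sqrt y)
          ≤ (2/π) * 2 * 1 * (1/Real.sqrt y) := by
            apply mul_le_mul_of_nonneg_right this (by positivity)
        _ = (4/π) * (1/Real.sqrt y) := by ring
  have key := intervalIntegral.integral_eq_sub_of_hasDerivAt_of_le (by norm_num)
    hcont hderiv hint
  rw [key, hf]
  have hx1' : (0:ℝ) < 1 + x := by linarith
  simp [Real.sqrt_one, Real.sqrt_zero]
  field_simp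
  ring
end

section
/- Approximate subgradient descent convergence: let S ⊆ ℝ^n be nonempty closed convex, f : ℝ^n → ℝ convex with nonempty minimizer set S* over S, and consider iterates x_{t+1} = P_S(x_t - ν_t g_t) where ν_t ≥ 0, ε_t ≥ 0, and g_t is an ε_t-approximate subgradient of f at x_t (f(x) ≥ f(x_t) + ⟨g_t, x - x_t⟩ - ε_t for all x ∈ S). If Σ_t ν_t = ∞ and Σ_t ν_t((1/2)‖g_t‖²ν_t + ε_t) < ∞, then the sequence {x_t} converges to some point of S*. -/
open Filter RealInnerProductSpace
set_option maxHeartbeats 1000000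

private lemma quasiFejer {d a : ℕ → ℝ} (hd : ∀ t, 0 ≤ d t) (ha : ∀ t, 0 ≤ a t)
    (hsa : Summable a) (hstep : ∀ t, d (t + 1) ≤ d t + a t) :
    ∃ L, Tendsto d atTop (nhds L) := by
  set A := ∑' t, a t with hA
  set R : ℕ → ℝ := fun t => A - ∑ s ∈ Finset.range t, a s with hR
  have hRtail : ∀ t, R t = ∑' s, a (s + t) := by
    intro t
    have h := Summable.sum_add_tsum_nat_add (f := a) t hsa
    simp only [hR]; linarith
  have hRnonneg : ∀ t, 0 ≤ R t := by
    intro t; rw [hRtail t]; exact tsum_nonneg fun s => ha _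
  have hRsucc : ∀ t, R t = a t + R (t + 1) := by
    intro t; simp only [hR, Finset.sum_range_succ]; ring
  have hR0 : Tendsto R atTop (nhds 0) := by
    have h1 := hsa.hasSum.tendsto_sum_nat
    have h2 : Tendsto (fun t => A - ∑ s ∈ Finset.range t, a s) atTop (nhds (A - A)) :=
      tendsto_const_nhds.sub h1
    simpa using h2
  set e : ℕ → ℝ := fun t => d t + R t with he
  have hanti : Antitone e := by
    apply antitone_nat_of_succ_le
    intro t
    have h1 := hstep t
    have h2 := hRsucc t
    simp only [he]; linarith
  have hbdd : BddBelow (Set.range e) := by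
    refine ⟨0, ?_⟩
    rintro _ ⟨t, rfl⟩
    exact add_nonneg (hd t) (hRnonneg t)
  have hetend := tendsto_atTop_ciInf hanti hbdd
  refine ⟨⨅ i, e i, ?_⟩
  have h3 : Tendsto (fun t => e t - R t) atTop (nhds ((⨅ i, e i) - 0)) := hetend.sub hR0
  have h4 : (fun t => e t - R t) = d := by
    funext t; simp [he]
  rw [h4] at h3; simpa using h3

private lemma key_ineq {n : ℕ} {S : Set (EuclideanSpace ℝ (Fin n))} (hSconv : Convex ℝ S)
    {xt p gt z : EuclideanSpace ℝ (Fin n)} {νt εt fxt fz : ℝ}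
    (hz : z ∈ S) (hνt : 0 ≤ νt) (hpS : p ∈ S)
    (hmin : ∀ w ∈ S, ‖p - (xt - νt • gt)‖ ≤ ‖w - (xt - νt • gt)‖)
    (hsb : fxt + ⟪gt, z - xt⟫ - εt ≤ fz) :
    ‖p - z‖ ^ 2 ≤ ‖xt - z‖ ^ 2 - 2 * νt * (fxt - fz) + (νt ^ 2 * ‖gt‖ ^ 2 + 2 * νt * εt) := by
  set u := xt - νt • gt with hu
  haveI : Nonempty S := ⟨⟨p, hpS⟩⟩
  have hchar : ∀ w ∈ S, ⟪u - p, w - p⟫ ≤ 0 := by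
    rw [← norm_eq_iInf_iff_real_inner_le_zero hSconv hpS]
    apply le_antisymm
    · apply le_ciInf
      rintro ⟨w, hw⟩
      rw [norm_sub_rev u p, norm_sub_rev u w]
      exact hmin w hw
    · apply ciInf_le _ (⟨p, hpS⟩ : S)
      refine ⟨0, ?_⟩
      rintro _ ⟨w, rfl⟩
      exact norm_nonneg _
  have h1 : ‖p - z‖ ^ 2 ≤ ‖u - z‖ ^ 2 := by
    have hin := hchar z hz
    have hexp : ‖u - z‖ ^ 2 = ‖u - p‖ ^ 2 + 2 * ⟪u - p, p - z⟫ + ‖p - z‖ ^ 2 := by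
      have heq : u - z = (u - p) + (p - z) := by abel
      rw [heq, norm_add_sq_real]
    have hnn : ⟪u - p, p - z⟫ = - ⟪u - p, z - p⟫ := by
      rw [← inner_neg_right]; congr 1; abel
    nlinarith [sq_nonneg ‖u - p‖]
  have h2 : ‖u - z‖ ^ 2 = ‖xt - z‖ ^ 2 - 2 * νt * ⟪gt, xt - z⟫ + νt ^ 2 * ‖gt‖ ^ 2 := by
    have heq : u - z = (xt - z) - νt • gt := by rw [hu]; abel
    rw [heq, norm_sub_sq_real, real_inner_smul_right, norm_smul, real_inner_comm]
    simp [abs_of_nonneg hνt]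
    ring
  have h3 : - ⟪gt, xt - z⟫ ≤ fz - fxt + εt := by
    have hzz : ⟪gt, z - xt⟫ = - ⟪gt, xt - z⟫ := by
      rw [← inner_neg_right]; congr 1; abel
    rw [hzz] at hsb; linarith
  have h4 := mul_le_mul_of_nonneg_left h3 hνt
  nlinarith

/-- Convergence of the approximate subgradient projection method
(Kiwiel 2004, Theorem 3.4). -/
theorem approx_subgradient_method_converges {n : ℕ}
    (S : Set (EuclideanSpace ℝ (Fin n))) (hSne : S.Nonempty) (hScl : IsClosed S)
    (hSconv : Convex ℝ S)
    (f : EuclideanSpace ℝ (Fin n) → ℝ) (hf : ConvexOn ℝ Set.univ f)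
    (hstar : {z ∈ S | ∀ w ∈ S, f z ≤ f w}.Nonempty)
    (x g : ℕ → EuclideanSpace ℝ (Fin n)) (ν ε : ℕ → ℝ)
    (hν : ∀ t, 0 ≤ ν t) (hε : ∀ t, 0 ≤ ε t)
    (hx0 : x 0 ∈ S)
    (hproj : ∀ t, x (t + 1) ∈ S ∧
      ∀ z ∈ S, ‖x (t + 1) - (x t - ν t • g t)‖ ≤ ‖z - (x t - ν t • g t)‖)
    (hsub : ∀ t, ∀ z ∈ S, f (x t) + ⟪g t, z - x t⟫ - ε t ≤ f z)
    (hdiv : Tendsto (fun T => ∑ t ∈ Finset.range T, ν t) atTop atTop)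
    (hsum : Summable fun t => ν t * ((1 / 2) * ‖g t‖ ^ 2 * ν t + ε t)) :
    ∃ xlim ∈ {z ∈ S | ∀ w ∈ S, f z ≤ f w}, Tendsto x atTop (nhds xlim) := by
  classical
  obtain ⟨zs, hzsS, hzsmin⟩ := hstar
  have hmem : ∀ t, x t ∈ S := by
    intro t
    cases t with
    | zero => exact hx0
    | succ t => exact (hproj t).1
  set a : ℕ → ℝ := fun t => ν t ^ 2 * ‖g t‖ ^ 2 + 2 * ν t * ε t with ha
  have hanonneg : ∀ t, 0 ≤ a t := by
    intro t; have := hν t; have := hε t; positivity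
  have hasum : Summable a := by
    have h2 := hsum.mul_left 2
    apply h2.congr
    intro t; simp only [ha]; ring
  -- key inequality
  have key : ∀ z ∈ S, ∀ t,
      ‖x (t + 1) - z‖ ^ 2 ≤ ‖x t - z‖ ^ 2 - 2 * ν t * (f (x t) - f z) + a t := by
    intro z hz t
    have hk := key_ineq hSconv hz (hν t) (hproj t).1 (hproj t).2 (hsub t z hz)
    simpa only [ha] using hk
  -- quasi-Fejér for any minimizer-like point
  have hQF : ∀ z ∈ S, (∀ w ∈ S, f z ≤ f w) →
      ∃ L, Tendsto (fun t => ‖x t - z‖ ^ 2) atTop (nhds L) := by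
    intro z hz hzmin
    apply quasiFejer (a := a) (fun t => by positivity) hanonneg hasum
    intro t
    have hk := key z hz t
    have hge : f z ≤ f (x t) := hzmin (x t) (hmem t)
    nlinarith [hν t]
  obtain ⟨L0, hL0⟩ := hQF zs hzsS hzsmin
  -- boundedness of the sequence
  have hdbdd : ∃ M, ∀ t, ‖x t - zs‖ ^ 2 ≤ M := by
    obtain ⟨M, hM⟩ := hL0.bddAbove_range
    exact ⟨M, fun t => hM ⟨t, rfl⟩⟩
  obtain ⟨M, hM⟩ := hdbdd
  -- summation bound
  set Δ : ℕ → ℝ := fun t => f (x t) - f zs with hΔ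
  have hΔnn : ∀ t, 0 ≤ Δ t := fun t => sub_nonneg.2 (hzsmin (x t) (hmem t))
  set A := ∑' t, a t with hA
  have hpartial : ∀ T, ∑ t ∈ Finset.range T, a t ≤ A := fun T =>
    Summable.sum_le_tsum _ (fun t _ => hanonneg t) hasum
  have hsumineq : ∀ T, 2 * ∑ t ∈ Finset.range T, ν t * Δ t ≤ ‖x 0 - zs‖ ^ 2 + A := by
    intro T
    have htel : ∀ T, 2 * ∑ t ∈ Finset.range T, ν t * Δ t
        ≤ ‖x 0 - zs‖ ^ 2 - ‖x T - zs‖ ^ 2 + ∑ t ∈ Finset.range T, a t := by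
      intro T
      induction T with
      | zero => simp
      | succ T ih =>
        have hk := key zs hzsS T
        rw [Finset.sum_range_succ, Finset.sum_range_succ]
        simp only [hΔ] at *
        nlinarith
    have h := htel T
    have := hpartial T
    nlinarith [sq_nonneg ‖x T - zs‖]
  -- frequently small Δ
  have hfreq : ∀ k : ℕ, ∃ᶠ t in atTop, Δ t < 1 / (k + 1 : ℝ) := by
    intro k
    by_contra hcon
    rw [not_frequently] at hcon
    simp only [not_lt] at hcon
    rw [eventually_atTop] at hcon
    obtain ⟨N, hN⟩ := hcon
    set δ : ℝ := 1 / (k + 1 : ℝ) with hδ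
    have hδpos : 0 < δ := by positivity
    have hub : ∀ T, δ * ((∑ t ∈ Finset.range T, ν t) - ∑ t ∈ Finset.range N, ν t)
        ≤ (‖x 0 - zs‖ ^ 2 + A) / 2 := by
      intro T
      rcases le_or_gt T N with hTN | hNT
      · have h1 : (∑ t ∈ Finset.range T, ν t) ≤ ∑ t ∈ Finset.range N, ν t := by
          apply Finset.sum_le_sum_of_subset_of_nonneg (Finset.range_subset_range.2 hTN)
          intro i _ _; exact hν i
        have h2 : 0 ≤ (‖x 0 - zs‖ ^ 2 + A) / 2 := by
          have := hsumineq 0; simp at this; nlinarith [sq_nonneg ‖x 0 - zs‖]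
        nlinarith
      · have hsplit : ∑ t ∈ Finset.range T, ν t * Δ t
            ≥ ∑ t ∈ Finset.Ico N T, ν t * Δ t := by
          rw [← Finset.sum_range_add_sum_Ico _ hNT.le]
          have : 0 ≤ ∑ t ∈ Finset.range N, ν t * Δ t :=
            Finset.sum_nonneg fun t _ => mul_nonneg (hν t) (hΔnn t)
          linarith
        have hlow : ∑ t ∈ Finset.Ico N T, ν t * δ ≤ ∑ t ∈ Finset.Ico N T, ν t * Δ t := by
          apply Finset.sum_le_sum
          intro i hi
          exact mul_le_mul_of_nonneg_left (hN i (Finset.mem_Ico.1 hi).1) (hν i)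
        have hIco : ∑ t ∈ Finset.Ico N T, ν t * δ
            = δ * ((∑ t ∈ Finset.range T, ν t) - ∑ t ∈ Finset.range N, ν t) := by
          rw [← Finset.sum_Ico_eq_sub _ hNT.le, Finset.mul_sum]
          exact Finset.sum_congr rfl fun i _ => mul_comm _ _
        have := hsumineq T
        linarith [hsplit, hlow, hIco.symm.le]
    -- contradiction with divergence
    obtain ⟨T, hT⟩ := (tendsto_atTop.1 hdiv
      ((∑ t ∈ Finset.range N, ν t) + ((‖x 0 - zs‖ ^ 2 + A) / 2 + 1) / δ)).exists
    have := hub T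
    have h5 : ((‖x 0 - zs‖ ^ 2 + A) / 2 + 1) ≤ (‖x 0 - zs‖ ^ 2 + A) / 2 := by
      have h6 : ((‖x 0 - zs‖ ^ 2 + A) / 2 + 1) / δ
          ≤ (∑ t ∈ Finset.range T, ν t) - ∑ t ∈ Finset.range N, ν t := by linarith
      calc ((‖x 0 - zs‖ ^ 2 + A) / 2 + 1) = δ * (((‖x 0 - zs‖ ^ 2 + A) / 2 + 1) / δ) := by
            field_simp
        _ ≤ δ * ((∑ t ∈ Finset.range T, ν t) - ∑ t ∈ Finset.range N, ν t) := by
            exact mul_le_mul_of_nonneg_left h6 hδpos.le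
        _ ≤ (‖x 0 - zs‖ ^ 2 + A) / 2 := hub T
    linarith
  -- extraction
  obtain ⟨φ, hφ, hφΔ⟩ := extraction_forall_of_frequently hfreq
  have hΔφ0 : Tendsto (fun k => Δ (φ k)) atTop (nhds 0) := by
    apply squeeze_zero (fun k => hΔnn _) (fun k => (hφΔ k).le)
    exact tendsto_one_div_add_atTop_nhds_zero_nat
  -- convergent subsequence
  have hball : ∀ k, x (φ k) ∈ Metric.closedBall zs (Real.sqrt M) := by
    intro k
    rw [Metric.mem_closedBall, dist_eq_norm]
    have h1 := hM (φ k)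
    have h2 : ‖x (φ k) - zs‖ = Real.sqrt (‖x (φ k) - zs‖ ^ 2) := by
      rw [Real.sqrt_sq (norm_nonneg _)]
    rw [h2]
    exact Real.sqrt_le_sqrt h1
  obtain ⟨xb, hxbmem, ψ, hψ, hψtend⟩ :=
    tendsto_subseq_of_bounded Metric.isBounded_closedBall hball
  have hfc : Continuous f := by
    rw [← continuousOn_univ]
    exact hf.continuousOn isOpen_univ
  have hcomp : Tendsto (fun k => x (φ (ψ k))) atTop (nhds xb) := hψtend
  have hΔsub : Tendsto (fun k => Δ (φ (ψ k))) atTop (nhds 0) :=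
    hΔφ0.comp hψ.tendsto_atTop
  have hfxb : f xb = f zs := by
    have h1 : Tendsto (fun k => f (x (φ (ψ k)))) atTop (nhds (f xb)) :=
      (hfc.tendsto xb).comp hcomp
    have h2 : Tendsto (fun k => f (x (φ (ψ k)))) atTop (nhds (f zs)) := by
      have : (fun k => f (x (φ (ψ k)))) = fun k => Δ (φ (ψ k)) + f zs := by
        funext k; simp [hΔ]
      rw [this]
      simpa using hΔsub.add tendsto_const_nhds
    exact tendsto_nhds_unique h1 h2
  have hxbS : xb ∈ S := hScl.mem_of_tendsto hcomp (Eventually.of_forall fun k => hmem _)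
  have hxbmin : ∀ w ∈ S, f xb ≤ f w := by
    intro w hw; rw [hfxb]; exact hzsmin w hw
  -- final convergence
  obtain ⟨L, hL⟩ := hQF xb hxbS hxbmin
  have hLsub : Tendsto (fun k => ‖x (φ (ψ k)) - xb‖ ^ 2) atTop (nhds L) :=
    hL.comp (hφ.comp hψ).tendsto_atTop
  have hzero : Tendsto (fun k => ‖x (φ (ψ k)) - xb‖ ^ 2) atTop (nhds 0) := by
    have h1 : Tendsto (fun k => x (φ (ψ k)) - xb) atTop (nhds (xb - xb)) :=
      hcomp.sub tendsto_const_nhds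
    rw [sub_self] at h1
    have h2 : Tendsto (fun k => ‖x (φ (ψ k)) - xb‖) atTop (nhds 0) := by
      simpa using h1.norm
    simpa using h2.pow 2
  have hLeq : L = 0 := tendsto_nhds_unique hLsub hzero
  rw [hLeq] at hL
  refine ⟨xb, ⟨hxbS, hxbmin⟩, ?_⟩
  rw [tendsto_iff_norm_sub_tendsto_zero]
  have h1 : Tendsto (fun t => Real.sqrt (‖x t - xb‖ ^ 2)) atTop (nhds (Real.sqrt 0)) :=
    hL.sqrt
  simpa [Real.sqrt_sq (norm_nonneg _)] using h1
end
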